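/- Let A, B ⊆ ℕ with s_A(x) ~ x^α and d_{A,B}(x) ~ x^β for some nonnegative reals α, β. Then x^{max(0, α−β)} ≪ s_B(x) ≪ x^{min(α+β, 1)}. -/

import Mathlib

open Filter

/-- Number of representations of `n` as `a i + a j`, `i ≤ j` (indices into the sequence `a`).
Since `a` is strictly increasing in all uses, `a i ≥ i`, so indices are bounded by `n`. -/
def Rf (a : ℕ → ℕ) (n : ℕ) : ℕ :=
  ((Finset.range (n+1) ×ˢ Finset.range (n+1)).filter
    (fun p => p.1 ≤ p.2 ∧ a p.1 + a p.2 = n)).card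

/-- `s_A(x) = max_{n ≤ x} R_A(n)`. -/
def sf (a : ℕ → ℕ) (x : ℕ) : ℕ := (Finset.range (x+1)).sup (Rf a)

/-- `d_{A,B}(x) = max_{t : a_t ≤ x ∨ b_t ≤ x} |a_t - b_t|`. For strictly increasing
sequences any such index `t` satisfies `t ≤ x`. -/
def df (a b : ℕ → ℕ) (x : ℕ) : ℕ :=
  (Finset.range (x+1)).sup (fun t => if a t ≤ x ∨ b t ≤ x then Nat.dist (a t) (b t) else 0)

/-- Number of representations of `n` as `p + q` with `p ≤ q`, `p, q ∈ A`. -/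
noncomputable def RS (A : Set ℕ) (n : ℕ) : ℕ :=
  Nat.card {p : ℕ × ℕ // p.1 ∈ A ∧ p.2 ∈ A ∧ p.1 ≤ p.2 ∧ p.1 + p.2 = n}

/-- `s_A(x) = max_{n ≤ x} R_A(n)` for a set `A`. -/
noncomputable def sS (A : Set ℕ) (x : ℕ) : ℕ := (Finset.range (x+1)).sup (RS A)

/-! If `|a_t - b_t| ≤ D` for every `a_t ≤ n`, then each representation `n = a_i + a_j` yields a
representation `b_i + b_j = m` with `|m - n| ≤ 2D`, and `(i, j)` determines `m`; hence
`R_A(n) ≤ (4D + 1) s_B(n + 2D)`, and symmetrically with `A` and `B` swapped. With `D = d(x) ≪ x^β`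
this gives `s_B(x) ≪ x^β s_A(2x) ≪ x^{α+β}`, and, applied at `x/2` (where `x/2 + 2d(x/2) ≤ x`
because `β < α ≤ 1`), `x^α ≪ s_A(x/2) ≪ x^β s_B(x)`. The trivial bounds `1 ≤ s_B(x) ≤ x + 1` cover
the remaining ranges of the exponents. -/

section Combinatorics

variable {a b : ℕ → ℕ}

def reprPairs (a : ℕ → ℕ) (n : ℕ) : Finset (ℕ × ℕ) :=
  (Finset.range (n + 1) ×ˢ Finset.range (n + 1)).filter (fun p => p.1 ≤ p.2 ∧ a p.1 + a p.2 = n)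

lemma Rf_eq_card_reprPairs (a : ℕ → ℕ) (n : ℕ) : Rf a n = (reprPairs a n).card := rfl

lemma mem_reprPairs {n : ℕ} {p : ℕ × ℕ} :
    p ∈ reprPairs a n ↔ (p.1 < n + 1 ∧ p.2 < n + 1) ∧ p.1 ≤ p.2 ∧ a p.1 + a p.2 = n := by
  simp only [reprPairs, Finset.mem_filter, Finset.mem_product, Finset.mem_range]

lemma Rf_le_succ (ha : Function.Injective a) (n : ℕ) : Rf a n ≤ n + 1 := by
  rw [Rf_eq_card_reprPairs, ← Finset.card_range (n + 1)]
  refine Finset.card_le_card_of_injOn Prod.fst (fun p hp => ?_) (fun p hp q hq hpq => ?_)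
  · exact Finset.mem_range.mpr (mem_reprPairs.mp hp).1.1
  · have hp' := (mem_reprPairs.mp hp).2.2
    have hq' := (mem_reprPairs.mp hq).2.2
    have h1 : a p.1 = a q.1 := congrArg a hpq
    exact Prod.ext hpq (ha (by omega))

lemma sf_mono (a : ℕ → ℕ) : Monotone (sf a) :=
  fun _ _ h => Finset.sup_mono (Finset.range_subset_range.mpr (by omega))

lemma Rf_le_sf {n x : ℕ} (h : n ≤ x) : Rf a n ≤ sf a x :=
  Finset.le_sup (f := Rf a) (Finset.mem_range.mpr (by omega))

lemma sf_le_two_mul (ha : Function.Injective a) {x : ℕ} (hx : 1 ≤ x) : sf a x ≤ 2 * x :=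
  Finset.sup_le fun n hn => (Rf_le_succ ha n).trans (by rw [Finset.mem_range] at hn; omega)

lemma one_le_sf (a : ℕ → ℕ) {x : ℕ} (hx : a 0 + a 0 ≤ x) : 1 ≤ sf a x :=
  (Finset.one_le_card.mpr ⟨(0, 0), mem_reprPairs.mpr ⟨⟨by omega, by omega⟩, le_rfl, rfl⟩⟩).trans
    (Rf_le_sf hx)

lemma df_comm (a b : ℕ → ℕ) : df a b = df b a := by
  ext x
  simp only [df, or_comm, Nat.dist_comm]

lemma dist_le_df (ha : StrictMono a) {x i : ℕ} (hi : a i ≤ x) :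
    Nat.dist (a i) (b i) ≤ df a b x := by
  have hix : i < x + 1 := Nat.lt_succ_of_le (ha.le_apply.trans hi)
  simpa [df, hi] using
    Finset.le_sup (f := fun t => if a t ≤ x ∨ b t ≤ x then Nat.dist (a t) (b t) else 0)
      (Finset.mem_range.mpr hix)

lemma Rf_le_mul_sf_add (hb : StrictMono b) {n D : ℕ}
    (hD : ∀ i, a i ≤ n → Nat.dist (a i) (b i) ≤ D) :
    Rf a n ≤ (4 * D + 1) * sf b (n + 2 * D) := by
  have hsub : reprPairs a n ⊆ (Finset.Icc (n - 2 * D) (n + 2 * D)).biUnion (reprPairs b) := by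
    intro p hp
    obtain ⟨-, hle, hsum⟩ := mem_reprPairs.mp hp
    have hd1 := hD p.1 (by omega)
    have hd2 := hD p.2 (by omega)
    have hb1 : p.1 ≤ b p.1 := hb.le_apply
    have hb2 : p.2 ≤ b p.2 := hb.le_apply
    simp only [Nat.dist] at hd1 hd2
    refine Finset.mem_biUnion.mpr ⟨b p.1 + b p.2, Finset.mem_Icc.mpr (by omega), ?_⟩
    exact mem_reprPairs.mpr (by omega)
  calc Rf a n ≤ ((Finset.Icc (n - 2 * D) (n + 2 * D)).biUnion (reprPairs b)).card :=
        Finset.card_le_card hsub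
    _ ≤ ∑ m ∈ Finset.Icc (n - 2 * D) (n + 2 * D), Rf b m := Finset.card_biUnion_le
    _ ≤ (Finset.Icc (n - 2 * D) (n + 2 * D)).card * sf b (n + 2 * D) :=
        Finset.sum_le_card_nsmul _ _ _ fun m hm => Rf_le_sf (Finset.mem_Icc.mp hm).2
    _ ≤ (4 * D + 1) * sf b (n + 2 * D) := by
        gcongr
        rw [Nat.card_Icc]
        omega

lemma sf_le_mul_sf_add (ha : StrictMono a) (hb : StrictMono b) (x : ℕ) :
    sf a x ≤ (4 * df a b x + 1) * sf b (x + 2 * df a b x) := by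
  refine Finset.sup_le fun n hn => ?_
  have hnx : n ≤ x := Nat.lt_succ_iff.mp (Finset.mem_range.mp hn)
  calc Rf a n ≤ (4 * df a b x + 1) * sf b (n + 2 * df a b x) :=
        Rf_le_mul_sf_add hb fun i hi => dist_le_df ha (hi.trans hnx)
    _ ≤ (4 * df a b x + 1) * sf b (x + 2 * df a b x) := by
        gcongr
        exact sf_mono b (by omega)

end Combinatorics

section Asymptotics

lemma eventually_mul_rpow_le_self (K : ℝ) {β : ℝ} (hβ1 : β < 1) :
    ∀ᶠ x : ℕ in atTop, K * (x : ℝ) ^ β ≤ x := by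
  have hinf : Tendsto (fun x : ℕ => (x : ℝ) ^ (1 - β)) atTop atTop :=
    (tendsto_rpow_atTop (by linarith)).comp tendsto_natCast_atTop_atTop
  filter_upwards [hinf.eventually_ge_atTop K, eventually_gt_atTop 0] with x hK hx
  have hx0 : (0 : ℝ) < x := Nat.cast_pos.mpr hx
  calc K * (x : ℝ) ^ β ≤ (x : ℝ) ^ (1 - β) * (x : ℝ) ^ β := by gcongr
    _ = x := by rw [← Real.rpow_add hx0, sub_add_cancel, Real.rpow_one]

lemma eventually_two_mul_le_self {d : ℕ → ℕ} {β C : ℝ} (hβ1 : β < 1)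
    (hd : ∀ᶠ x : ℕ in atTop, (d x : ℝ) ≤ C * (x : ℝ) ^ β) :
    ∀ᶠ x : ℕ in atTop, 2 * d x ≤ x := by
  filter_upwards [hd, eventually_mul_rpow_le_self (2 * C) hβ1] with x h1 h2
  exact_mod_cast (by push_cast; linarith : ((2 * d x : ℕ) : ℝ) ≤ x)

variable {f : ℕ → ℝ} {γ : ℝ}

lemma eventually_le_two_mul_rpow (hf : Tendsto (fun x : ℕ => f x / (x : ℝ) ^ γ) atTop (nhds 1)) :
    ∀ᶠ x : ℕ in atTop, f x ≤ 2 * (x : ℝ) ^ γ := by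
  filter_upwards [hf.eventually (eventually_le_nhds one_lt_two), eventually_gt_atTop 0] with x h hx
  rwa [div_le_iff₀ (Real.rpow_pos_of_pos (Nat.cast_pos.mpr hx) γ)] at h

lemma eventually_rpow_le_two_mul (hf : Tendsto (fun x : ℕ => f x / (x : ℝ) ^ γ) atTop (nhds 1)) :
    ∀ᶠ x : ℕ in atTop, (x : ℝ) ^ γ ≤ 2 * f x := by
  filter_upwards [hf.eventually (eventually_ge_nhds one_half_lt_one), eventually_gt_atTop 0]
    with x h hx
  rw [le_div_iff₀ (Real.rpow_pos_of_pos (Nat.cast_pos.mpr hx) γ)] at h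
  linarith

lemma eventually_rpow_le_mul_of_two_mul {g : ℕ → ℕ} (hg : Monotone g) {K : ℝ} (hγ : 0 ≤ γ)
    (hK : 0 ≤ K) (h : ∀ᶠ y : ℕ in atTop, (y : ℝ) ^ γ ≤ K * g (2 * y)) :
    ∀ᶠ x : ℕ in atTop, (x : ℝ) ^ γ ≤ 3 ^ γ * K * g x := by
  filter_upwards [(Nat.tendsto_div_const_atTop two_ne_zero).eventually h, eventually_ge_atTop 2]
    with x hx hx2
  have h3 : (x : ℝ) ≤ 3 * ((x / 2 : ℕ) : ℝ) := by exact_mod_cast (by omega : x ≤ 3 * (x / 2))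
  calc (x : ℝ) ^ γ ≤ (3 * ((x / 2 : ℕ) : ℝ)) ^ γ := by gcongr
    _ = 3 ^ γ * ((x / 2 : ℕ) : ℝ) ^ γ := Real.mul_rpow (by norm_num) (Nat.cast_nonneg _)
    _ ≤ 3 ^ γ * (K * g (2 * (x / 2))) := by gcongr
    _ ≤ 3 ^ γ * (K * g x) := by
        gcongr
        exact hg (Nat.mul_div_le x 2)
    _ = 3 ^ γ * K * g x := by ring

end Asymptotics

section Transfer

variable {a b : ℕ → ℕ} {α β c C : ℝ}

lemma le_one_of_eventually_rpow_le_mul_sf (ha : Function.Injective a)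
    (hA : ∀ᶠ x : ℕ in atTop, (x : ℝ) ^ α ≤ c * sf a x) : α ≤ 1 := by
  by_contra! h
  have hinf : Tendsto (fun x : ℕ => (x : ℝ) ^ (α - 1)) atTop atTop :=
    (tendsto_rpow_atTop (by linarith)).comp tendsto_natCast_atTop_atTop
  obtain ⟨x, hAx, hbig, hx⟩ :=
    (hA.and ((hinf.eventually_gt_atTop (2 * c)).and (eventually_ge_atTop 1))).exists
  have hx0 : (0 : ℝ) < x := by exact_mod_cast hx
  have hsf : (sf a x : ℝ) ≤ 2 * x := by exact_mod_cast sf_le_two_mul ha hx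
  have hsplit : (x : ℝ) ^ α = (x : ℝ) ^ (α - 1) * x := by
    rw [Real.rpow_sub hx0, Real.rpow_one, div_mul_cancel₀ _ hx0.ne']
  have hpos : (0 : ℝ) < (x : ℝ) ^ α := Real.rpow_pos_of_pos hx0 α
  rcases le_or_gt 0 c with hc | hc
  · nlinarith
  · nlinarith [(Nat.cast_nonneg (sf a x) : (0 : ℝ) ≤ sf a x)]

lemma eventually_rpow_sub_le_mul_sf_two_mul (ha : StrictMono a) (hb : StrictMono b)
    (hβ : 0 ≤ β) (hβ1 : β < 1) (hc : 0 ≤ c)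
    (hA : ∀ᶠ x : ℕ in atTop, (x : ℝ) ^ α ≤ c * sf a x)
    (hD : ∀ᶠ x : ℕ in atTop, (df a b x : ℝ) ≤ C * (x : ℝ) ^ β) :
    ∀ᶠ x : ℕ in atTop, (x : ℝ) ^ (α - β) ≤ c * (4 * C + 1) * sf b (2 * x) := by
  filter_upwards [hA, hD, eventually_two_mul_le_self hβ1 hD, eventually_ge_atTop 1]
    with x hAx hDx h2d hx
  have hx0 : (0 : ℝ) < x := by exact_mod_cast hx
  have hxβ : 1 ≤ (x : ℝ) ^ β := Real.one_le_rpow (by exact_mod_cast hx) hβ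
  have hcomb : sf a x ≤ (4 * df a b x + 1) * sf b (2 * x) :=
    (sf_le_mul_sf_add ha hb x).trans (Nat.mul_le_mul_left _ (sf_mono b (by omega)))
  rw [Real.rpow_sub hx0, div_le_iff₀ (by positivity)]
  calc (x : ℝ) ^ α ≤ c * sf a x := hAx
    _ ≤ c * ((4 * df a b x + 1) * sf b (2 * x)) := by gcongr; exact_mod_cast hcomb
    _ ≤ c * ((4 * C + 1) * (x : ℝ) ^ β * sf b (2 * x)) := by gcongr; linarith
    _ = c * (4 * C + 1) * sf b (2 * x) * (x : ℝ) ^ β := by ring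

lemma eventually_sf_le_mul_rpow_add (ha : StrictMono a) (hb : StrictMono b)
    (hβ : 0 ≤ β) (hβ1 : β < 1)
    (hA : ∀ᶠ x : ℕ in atTop, (sf a x : ℝ) ≤ c * (x : ℝ) ^ α)
    (hD : ∀ᶠ x : ℕ in atTop, (df a b x : ℝ) ≤ C * (x : ℝ) ^ β) :
    ∀ᶠ x : ℕ in atTop, (sf b x : ℝ) ≤ (4 * C + 1) * c * 2 ^ α * (x : ℝ) ^ (α + β) := by
  filter_upwards [(tendsto_id.const_mul_atTop' two_pos).eventually hA, hD,
    eventually_two_mul_le_self hβ1 hD, eventually_ge_atTop 1] with x hAx hDx h2d hx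
  have hx0 : (0 : ℝ) < x := by exact_mod_cast hx
  have hxβ : 1 ≤ (x : ℝ) ^ β := Real.one_le_rpow (by exact_mod_cast hx) hβ
  have hcomb : sf b x ≤ (4 * df a b x + 1) * sf a (2 * x) := by
    have h := sf_le_mul_sf_add hb ha x
    rw [← df_comm] at h
    exact h.trans (Nat.mul_le_mul_left _ (sf_mono a (by omega)))
  calc (sf b x : ℝ) ≤ (4 * df a b x + 1) * sf a (2 * x) := by exact_mod_cast hcomb
    _ ≤ (4 * C + 1) * (x : ℝ) ^ β * (c * ((2 * x : ℕ) : ℝ) ^ α) :=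
        mul_le_mul (by linarith) hAx (Nat.cast_nonneg _)
          (by linarith [(Nat.cast_nonneg (df a b x) : (0 : ℝ) ≤ df a b x)])
    _ = (4 * C + 1) * c * 2 ^ α * (x : ℝ) ^ (α + β) := by
        rw [Nat.cast_mul, Nat.cast_two, Real.mul_rpow zero_le_two hx0.le, Real.rpow_add hx0]
        ring

end Transfer

theorem stmt18 (a b : ℕ → ℕ) (ha : StrictMono a) (hb : StrictMono b)
    (α β : ℝ) (hα : 0 ≤ α) (hβ : 0 ≤ β)
    (hs : Tendsto (fun x : ℕ => (sf a x : ℝ) / (x : ℝ) ^ α) atTop (nhds 1))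
    (hd : Tendsto (fun x : ℕ => (df a b x : ℝ) / (x : ℝ) ^ β) atTop (nhds 1)) :
    (∃ c : ℝ, ∀ᶠ x : ℕ in atTop, (x : ℝ) ^ max 0 (α - β) ≤ c * (sf b x : ℝ)) ∧
    (∃ C : ℝ, ∀ᶠ x : ℕ in atTop, (sf b x : ℝ) ≤ C * (x : ℝ) ^ min (α + β) 1) := by
  have hA := eventually_rpow_le_two_mul hs
  have hD := eventually_le_two_mul_rpow hd
  have hα1 := le_one_of_eventually_rpow_le_mul_sf ha.injective hA
  constructor
  · rcases le_or_gt α β with hαβ | hβα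
    · refine ⟨1, ?_⟩
      filter_upwards [eventually_ge_atTop (b 0 + b 0)] with x hx
      rw [max_eq_left (sub_nonpos.mpr hαβ), Real.rpow_zero, one_mul]
      exact_mod_cast one_le_sf b hx
    · rw [max_eq_right (sub_nonneg.mpr hβα.le)]
      exact ⟨_, eventually_rpow_le_mul_of_two_mul (sf_mono b) (sub_nonneg.mpr hβα.le)
        (by norm_num) (eventually_rpow_sub_le_mul_sf_two_mul ha hb hβ (hβα.trans_le hα1)
          zero_le_two hA hD)⟩
  · rcases le_or_gt 1 (α + β) with hαβ | hαβ
    · refine ⟨2, ?_⟩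
      filter_upwards [eventually_ge_atTop 1] with x hx
      rw [min_eq_right hαβ, Real.rpow_one]
      exact_mod_cast sf_le_two_mul hb.injective hx
    · rw [min_eq_left hαβ.le]
      exact ⟨_, eventually_sf_le_mul_rpow_add ha hb hβ (by linarith)
        (eventually_le_two_mul_rpow hs) hD⟩
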